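/- arXiv:1211.4608 — 2 statements merged into one kernel-verified Lean document; each statement's English description precedes it below -/
import Mathlib

section
/- Let K be an algebraically closed field of characteristic zero and let F be a field extension of K that is finitely generated as a field extension. Then the multiplicative group K^× is exactly the set of divisible elements of F^×: for x ∈ F with x ≠ 0, one has x ∈ K if and only if for every positive integer n there exists y ∈ F with yⁿ = x. In particular, the field of constants K is determined by the abstract field F. -/
/-- If `s` is an algebraically independent set over `K` in `F` and `x ∈ s`, then `x` is not
a `p`-th power (`p ≥ 2`) in the intermediate field generated by `s`. -/
lemma aux_not_pow {K F : Type} [Field K] [Field F] [Algebra K F]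
    {s : Set F} (hs : AlgebraicIndependent K ((↑) : s → F))
    {x : F} (hxs : x ∈ s) (hx0 : x ≠ 0) {p : ℕ} (hp : 2 ≤ p)
    {z : F} (hz : z ∈ IntermediateField.adjoin K s) : z ^ p ≠ x := by
  classical
  intro h
  obtain ⟨r, q, hzeq⟩ := (IntermediateField.mem_adjoin_iff K z).1 hz
  set A := MvPolynomial.aeval (R := K) (Subtype.val : s → F) with hA
  have hinj : Function.Injective A := algebraicIndependent_iff_injective_aeval.1 hs
  have hqF : A q ≠ 0 := by
    intro h0
    rw [hzeq, h0, div_zero, zero_pow (by omega : p ≠ 0)] at h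
    exact hx0 h.symm
  have hzq : z * A q = A r := by
    rw [hzeq]; field_simp
  have h2 : (A r) ^ p = x * (A q) ^ p := by
    rw [← hzq, mul_pow, h]
  have hAX : A (MvPolynomial.X ⟨x, hxs⟩) = x := MvPolynomial.aeval_X _ _
  have hkey : A (r ^ p) = A (MvPolynomial.X ⟨x, hxs⟩ * q ^ p) := by
    simp only [map_mul, map_pow, hAX]
    exact h2
  have heq : r ^ p = MvPolynomial.X ⟨x, hxs⟩ * q ^ p := hinj hkey
  have hq : q ≠ 0 := fun h0 => hqF (by rw [h0, map_zero])
  have hr : r ≠ 0 := by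
    intro h0
    rw [h0, zero_pow (by omega : p ≠ 0)] at heq
    exact (mul_ne_zero (MvPolynomial.X_ne_zero _) (pow_ne_zero _ hq)) heq.symm
  set i : s := (⟨x, hxs⟩ : s) with hi
  set e := (MvPolynomial.renameEquiv K (Equiv.optionSubtypeNe i).symm).trans
      (MvPolynomial.optionEquivLeft K {b : s // b ≠ i}) with he_def
  have heX : e (MvPolynomial.X i) = Polynomial.X := by
    simp only [he_def, AlgEquiv.trans_apply, MvPolynomial.renameEquiv_apply,
      MvPolynomial.rename_X, Equiv.optionSubtypeNe_symm_self,
      MvPolynomial.optionEquivLeft_X_none]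
  have he : (e r) ^ p = Polynomial.X * (e q) ^ p := by
    rw [← map_pow, ← heX, ← map_pow, ← map_mul, heq]
  have her : e r ≠ 0 := fun h0 => hr (e.injective (by rw [h0, map_zero]))
  have heq' : e q ≠ 0 := fun h0 => hq (e.injective (by rw [h0, map_zero]))
  have heq2 : p * (e r).natDegree = 1 + p * (e q).natDegree := by
    have hdeg := congrArg Polynomial.natDegree he
    rwa [Polynomial.natDegree_pow, Polynomial.natDegree_mul Polynomial.X_ne_zero
      (pow_ne_zero _ heq'), Polynomial.natDegree_X, Polynomial.natDegree_pow] at hdeg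
  have hpd : p ∣ 1 := by
    have h1 : p ∣ p * (e r).natDegree := dvd_mul_right _ _
    rw [heq2, Nat.add_comm] at h1
    exact (Nat.dvd_add_right (dvd_mul_right _ _)).1 h1
  have := Nat.le_of_dvd one_pos hpd
  omega

/-- **The field of constants is the set of divisible elements.**
Let `K` be an algebraically closed field of characteristic zero and let `F` be a field
extension of `K` that is finitely generated as a field extension.  Then the multiplicative
group `K^×` is exactly the set of divisible elements of `F^×`: for `x ∈ F`, `x ≠ 0`, one has
`x ∈ K` if and only if for every positive integer `n` there exists `y ∈ F` with `y ^ n = x`. -/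
theorem field_of_constants_eq_divisible_elements
    (K F : Type) [Field K] [IsAlgClosed K] [CharZero K] [Field F] [Algebra K F]
    (hfg : (⊤ : IntermediateField K F).FG)
    (x : F) (hx : x ≠ 0) :
    x ∈ (algebraMap K F).range ↔ ∀ n : ℕ, 0 < n → ∃ y : F, y ^ n = x := by
  constructor
  · rintro ⟨k, rfl⟩ n hn
    obtain ⟨c, hc⟩ := IsAlgClosed.exists_pow_nat_eq k hn
    exact ⟨algebraMap K F c, by rw [← map_pow, hc]⟩
  · intro hdiv
    by_cases halg : IsAlgebraic K x
    · exact minpoly.mem_range_of_degree_eq_one K x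
        (IsAlgClosed.degree_eq_one_of_irreducible K (minpoly.irreducible halg.isIntegral))
    exfalso
    have htr : Transcendental K x := halg
    have hsing : AlgebraicIndependent K ((↑) : ({x} : Set F) → F) := by
      rw [algebraicIndependent_unique_type_iff]
      simpa using htr
    obtain ⟨s, hxs', hmax⟩ := exists_maximal_algebraicIndependent ({x} : Set F) Set.univ
      (Set.subset_univ _) hsing
    have hxs : x ∈ s := hxs' rfl
    have hbasis : IsTranscendenceBasis K ((↑) : s → F) := by
      refine ⟨hmax.prop.1, fun t ht hst => ?_⟩
      simp only [Subtype.range_coe_subtype, Set.setOf_mem_eq] at *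
      exact hmax.eq_of_le ⟨ht, Set.subset_univ _⟩ hst
    have halgL : Algebra.IsAlgebraic (IntermediateField.adjoin K s) F := by
      have := hbasis.isAlgebraic_field
      rwa [Subtype.range_coe] at this
    set L := IntermediateField.adjoin K s with hL
    have hfd : FiniteDimensional L F := by
      obtain ⟨t, ht⟩ := hfg
      have h1 : IntermediateField.restrictScalars K
          (IntermediateField.adjoin L (↑t : Set F)) = ⊤ := by
        rw [IntermediateField.restrictScalars_adjoin, eq_top_iff, ← ht]
        exact IntermediateField.adjoin.mono _ _ _ Set.subset_union_right
      have htop : IntermediateField.adjoin L (↑t : Set F) = ⊤ :=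
        IntermediateField.restrictScalars_injective K
          (by rw [h1]; rfl)
      have hfin : FiniteDimensional L (IntermediateField.adjoin L (↑t : Set F)) :=
        IntermediateField.finiteDimensional_adjoin (fun a _ => (halgL.isAlgebraic a).isIntegral)
      rw [htop] at hfin
      exact IntermediateField.topEquiv.toLinearEquiv.finiteDimensional
    obtain ⟨p, hpge, hp⟩ := Nat.exists_infinite_primes (Module.finrank L F + 1)
    obtain ⟨y, hy⟩ := hdiv p hp.pos
    have hxL : x ∈ L := IntermediateField.subset_adjoin K s hxs
    have hnot : ∀ b : L, b ^ p ≠ (⟨x, hxL⟩ : L) := by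
      intro b hb
      have hbF : (b : F) ^ p = x := by
        have := congrArg Subtype.val hb
        simpa using this
      exact aux_not_pow hmax.prop.1 hxs hx hp.two_le b.2 hbF
    have hirr : Irreducible (Polynomial.X ^ p - Polynomial.C (⟨x, hxL⟩ : L)) :=
      X_pow_sub_C_irreducible_of_prime hp hnot
    have haev : Polynomial.aeval y (Polynomial.X ^ p - Polynomial.C (⟨x, hxL⟩ : L)) = 0 := by
      simp [hy]
    have hmin : minpoly L y = Polynomial.X ^ p - Polynomial.C (⟨x, hxL⟩ : L) :=
      (minpoly.eq_of_irreducible_of_monic hirr haev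
        (Polynomial.monic_X_pow_sub_C _ hp.ne_zero)).symm
    have hle := minpoly.natDegree_le (A := L) y
    rw [hmin, Polynomial.natDegree_X_pow_sub_C] at hle
    omega
end

section
/- Let G be a profinite group and ζ : G → G a continuous group automorphism. Suppose there is a sequence (Γ_n)_{n∈ℕ} of open normal subgroups of G with Γ_{n+1} ⊆ Γ_n for all n, ζ(Γ_n) = Γ_n for all n, and ⋂_n Γ_n = {1}, and suppose that for every n the automorphism of the finite group G/Γ_n induced by ζ is an inner automorphism. Then ζ is an inner automorphism of G. -/
/-- **Inner automorphisms of profinite groups are detected on a cofinal filtration.**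
Let `G` be a profinite group (compact, Hausdorff, totally disconnected topological group)
and `ζ : G → G` a continuous group automorphism.  Suppose there is a decreasing sequence
`(Γ n)` of open normal subgroups of `G`, each stable under `ζ`, with `⋂ n, Γ n = {1}`, such
that for every `n` the automorphism induced by `ζ` on the (finite) quotient `G ⧸ Γ n` is
inner.  Then `ζ` is an inner automorphism of `G`. -/
theorem inner_of_inner_on_cofinal_filtration
    (G : Type) [Group G] [TopologicalSpace G] [IsTopologicalGroup G]
    [CompactSpace G] [T2Space G] [TotallyDisconnectedSpace G]
    (ζ : G ≃* G) (hζ : Continuous ζ)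
    (Γ : ℕ → Subgroup G)
    (hopen : ∀ n, IsOpen (Γ n : Set G))
    (hnormal : ∀ n, (Γ n).Normal)
    (hdec : ∀ n, Γ (n + 1) ≤ Γ n)
    (hstab : ∀ n, ∀ g : G, g ∈ Γ n ↔ ζ g ∈ Γ n)
    (hinter : ⨅ n, Γ n = ⊥)
    (hinner : ∀ n, ∃ g : G, ∀ x : G,
      (QuotientGroup.mk (ζ x) : G ⧸ Γ n) = QuotientGroup.mk (g * x * g⁻¹)) :
    ∃ g : G, ∀ x : G, ζ x = g * x * g⁻¹ := by
  set S : ℕ → Set G := fun n => {g : G | ∀ x : G, (ζ x)⁻¹ * (g * x * g⁻¹) ∈ Γ n} with hS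
  have hclosed : ∀ n, IsClosed (S n) := by
    intro n
    have : S n = ⋂ x : G, (fun g => (ζ x)⁻¹ * (g * x * g⁻¹)) ⁻¹' (Γ n : Set G) := by
      ext g; simp [hS, Set.mem_iInter]
    rw [this]
    exact isClosed_iInter fun x =>
      IsClosed.preimage (continuous_const.mul ((continuous_id.mul continuous_const).mul continuous_inv)) ((Γ n).isClosed_of_isOpen (hopen n))
  have hne : ∀ n, (S n).Nonempty := by
    intro n
    obtain ⟨g, hg⟩ := hinner n
    refine ⟨g, fun x => ?_⟩
    have := hg x
    rwa [QuotientGroup.eq] at this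
  have hmono : ∀ n, S (n + 1) ⊆ S n := fun n g hg x => hdec n (hg x)
  have := IsCompact.nonempty_iInter_of_sequence_nonempty_isCompact_isClosed S hmono hne
    ((hclosed 0).isCompact) hclosed
  obtain ⟨g, hg⟩ := this
  refine ⟨g, fun x => ?_⟩
  simp only [Set.mem_iInter] at hg
  have : (ζ x)⁻¹ * (g * x * g⁻¹) ∈ ⨅ n, Γ n := by
    rw [Subgroup.mem_iInf]; exact fun n => hg n x
  rw [hinter, Subgroup.mem_bot] at this
  have := inv_mul_eq_one.mp this
  exact this
end
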